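/- Ordering of estimands under nonnegative effects (Supplementary equation (C.3.4)): Assume (A1)–(A3), (A5), (A6), the MSM and (A4.1). Then θ_rsw^(m) = Σ_{j=1}^{m} ψ_j, θ_sw^(m) = Σ_{j=1}^{m} ψ_j + Σ_{j=m+1}^{K} ψ_j q_j, θ^(K) = Σ_{j=1}^{K} ψ_j, and θ_rsw^(m) ≤ θ_sw^(m) ≤ θ^(K). -/

import Mathlib

open MeasureTheory Finset
open scoped Classical

namespace MSMPaper

noncomputable section

variable {Ω : Type*} [MeasurableSpace Ω] {𝓛 : Type*}

/-- Conditional probability `P(E | F) = P(E ∩ F) / P(F)` as a real number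
(junk value `0` when `P F = 0`). -/
def cP (P : Measure Ω) (E F : Set Ω) : ℝ := (P (E ∩ F)).toReal / (P F).toReal

variable {K : ℕ}

/-- Event `Ā(t−1) = b̄` (treatment history up to, not including, time `t`). -/
def Apast (A : Fin K → Ω → Bool) (t : ℕ) (b : Fin K → Bool) : Set Ω :=
  {ω | ∀ k : Fin K, (k : ℕ) < t → A k ω = b k}

/-- Event `L̄(t) = l̄` (covariate history up to and including time `t`). -/
def Lpast (L : Fin K → Ω → 𝓛) (t : ℕ) (l : Fin K → 𝓛) : Set Ω :=
  {ω | ∀ k : Fin K, (k : ℕ) ≤ t → L k ω = l k}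

/-- Event `A̲(s, t−1) = b` (treatment history from time `s` up to, not including, `t`). -/
def Aseg (A : Fin K → Ω → Bool) (s t : ℕ) (b : Fin K → Bool) : Set Ω :=
  {ω | ∀ k : Fin K, s ≤ (k : ℕ) → (k : ℕ) < t → A k ω = b k}

/-- Event `A̲(K−m) = a̲` for a (last-`m`) treatment vector `as`. -/
def EtrV (A : Fin K → Ω → Bool) (m : ℕ) (as : Fin K → Bool) : Set Ω :=
  {ω | ∀ k : Fin K, K - m ≤ (k : ℕ) → A k ω = as k}

/-- Event `A̲(K−m) = a_m` (constant `a` on the last `m` coordinates). -/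
def Etr (A : Fin K → Ω → Bool) (m : ℕ) (a : Bool) : Set Ω :=
  EtrV A m (fun _ => a)

/-- Stabilized weights `W_sw`. -/
def Wsw (P : Measure Ω) (A : Fin K → Ω → Bool) (L : Fin K → Ω → 𝓛) : Ω → ℝ :=
  fun ω => ∏ k : Fin K,
    cP P {ω' | A k ω' = A k ω} (Apast A (k : ℕ) (fun j => A j ω)) /
      cP P {ω' | A k ω' = A k ω}
        (Lpast L (k : ℕ) (fun j => L j ω) ∩ Apast A (k : ℕ) (fun j => A j ω))

/-- Restricted stabilized weights `W_rsw^(m)`. -/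
def Wrsw (P : Measure Ω) (A : Fin K → Ω → Bool) (L : Fin K → Ω → 𝓛) (m : ℕ) : Ω → ℝ :=
  fun ω => ∏ k ∈ Finset.univ.filter (fun k : Fin K => K - m ≤ (k : ℕ)),
    cP P {ω' | A k ω' = A k ω} (Aseg A (K - m) (k : ℕ) (fun j => A j ω)) /
      cP P {ω' | A k ω' = A k ω}
        (Lpast L (k : ℕ) (fun j => L j ω) ∩ Apast A (k : ℕ) (fun j => A j ω))

/-- Partial stabilized weights `W_psw^(m)`. -/
def Wpsw (P : Measure Ω) (A : Fin K → Ω → Bool) (L : Fin K → Ω → 𝓛) (m : ℕ) : Ω → ℝ :=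
  fun ω => ∏ k ∈ Finset.univ.filter (fun k : Fin K => K - m ≤ (k : ℕ)),
    cP P {ω' | A k ω' = A k ω} (Apast A (k : ℕ) (fun j => A j ω)) /
      cP P {ω' | A k ω' = A k ω}
        (Lpast L (k : ℕ) (fun j => L j ω) ∩ Apast A (k : ℕ) (fun j => A j ω))

/-- IP-weighted contrast `θ_W^(m)`. -/
def θW (P : Measure Ω) (A : Fin K → Ω → Bool) (m : ℕ) (W Y : Ω → ℝ) : ℝ :=
  (∫ ω in Etr A m true, W ω * Y ω ∂P) / (∫ ω in Etr A m true, W ω ∂P) -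
    (∫ ω in Etr A m false, W ω * Y ω ∂P) / (∫ ω in Etr A m false, W ω ∂P)

/-- `rev j` is the time index `K − 1 − j`; the paper's coefficient `ψ_{j+1}`
multiplies `a(K − (j+1)) = a(rev j)`. -/
def rev (j : Fin K) : Fin K := ⟨K - 1 - (j : ℕ), by have := j.isLt; omega⟩

/-- `θ^(K) = 𝔼[Y^{1_K}] − 𝔼[Y^{0_K}]`. -/
def θKfull (P : Measure Ω) (Ypot : (Fin K → Bool) → Ω → ℝ) : ℝ :=
  (∫ ω, Ypot (fun _ => true) ω ∂P) - ∫ ω, Ypot (fun _ => false) ω ∂P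

/-- (A1) consistency. -/
def A1ok (A : Fin K → Ω → Bool) (Y : Ω → ℝ) (Ypot : (Fin K → Bool) → Ω → ℝ) : Prop :=
  ∀ (a : Fin K → Bool) (ω : Ω), (∀ k, A k ω = a k) → Y ω = Ypot a ω

/-- (A2) sequential exchangeability. -/
def A2ok (P : Measure Ω) (A : Fin K → Ω → Bool) (L : Fin K → Ω → 𝓛)
    (Ypot : (Fin K → Bool) → Ω → ℝ) : Prop :=
  ∀ (t : Fin K) (a : Fin K → Bool) (B : Set ℝ), MeasurableSet B →
    ∀ (av : Bool) (l : Fin K → 𝓛) (b : Fin K → Bool),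
      0 < P (Lpast L (t : ℕ) l ∩ Apast A (t : ℕ) b) →
      cP P ({ω | Ypot a ω ∈ B} ∩ {ω | A t ω = av}) (Lpast L (t : ℕ) l ∩ Apast A (t : ℕ) b) =
        cP P {ω | Ypot a ω ∈ B} (Lpast L (t : ℕ) l ∩ Apast A (t : ℕ) b) *
          cP P {ω | A t ω = av} (Lpast L (t : ℕ) l ∩ Apast A (t : ℕ) b)

/-- (A3) positivity. -/
def A3ok (P : Measure Ω) (A : Fin K → Ω → Bool) (L : Fin K → Ω → 𝓛) : Prop :=
  ∀ (t : Fin K) (av : Bool) (l : Fin K → 𝓛) (b : Fin K → Bool),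
    0 < P (Lpast L (t : ℕ) l ∩ Apast A (t : ℕ) b) →
    0 < cP P {ω | A t ω = av} (Lpast L (t : ℕ) l ∩ Apast A (t : ℕ) b)

/-- The marginal structural model `𝔼[Y^{ā}] = ψ₀ + Σ_{j=1}^K ψ_j a(K−j)`;
here `ψ j` is the paper's `ψ_{j+1}`, the coefficient of `a(K−1−j)`. -/
def MSMeq (P : Measure Ω) (Ypot : (Fin K → Bool) → Ω → ℝ) (ψ0 : ℝ) (ψ : Fin K → ℝ) : Prop :=
  ∀ a : Fin K → Bool,
    (∫ ω, Ypot a ω ∂P) = ψ0 + ∑ j : Fin K, ψ j * (if a (rev j) = true then 1 else 0)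

/-- (A5) conditional MSM given the past treatment history `Ā(K−m−1)`. -/
def A5ok (P : Measure Ω) (A : Fin K → Ω → Bool) (Ypot : (Fin K → Bool) → Ω → ℝ)
    (m : ℕ) : Prop :=
  ∀ b : Fin K → Bool, 0 < P (Apast A (K - m) b) →
    ∃ (φ0 : ℝ) (φ : Fin K → ℝ), ∀ a : Fin K → Bool,
      (∫ ω in Apast A (K - m) b, Ypot a ω ∂P) / (P (Apast A (K - m) b)).toReal =
        φ0 + ∑ j : Fin K, φ j * (if a (rev j) = true then 1 else 0)

/-- `q_{j+1} = P(A(K−1−j)=1 | A̲(K−m)=1_m) − P(A(K−1−j)=1 | A̲(K−m)=0_m)`. -/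
def qcoef (P : Measure Ω) (A : Fin K → Ω → Bool) (m : ℕ) (j : Fin K) : ℝ :=
  cP P {ω | A (rev j) ω = true} (Etr A m true) -
    cP P {ω | A (rev j) ω = true} (Etr A m false)

end

/-!
On the event `Ā = b̄` each weight is a constant times the inverse propensities
`∏ 1 / P(A(k) = b(k) | L̄(k), Ā(k−1))` over a final block of times `k ≥ t₀`. Integrating these
away one time step at a time, each step cancelling by sequential exchangeability (A2) and
positivity (A3), is the g-formula: `∫_{Ā = b̄} W · Y^{b̄} = c · ∫_{Ā(t₀−1) = b̄} Y^{b̄}`.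

For `W_sw` we have `t₀ = 0` and, by the chain rule, `c = P(Ā = b̄)`; with (A1) and the MSM the
weighted mean of `Y` in the arm `A̲(K−m) = a_m` is the MSM averaged over the treatment histories
observed in that arm, `ψ₀ + Σ_j ψ_j P(A(K−j) = 1 | A̲(K−m) = a_m)`, and the difference of the two
arms is `Σ_{j ≤ m} ψ_j + Σ_{j > m} ψ_j q_j`. For `W_rsw^(m)` we have `t₀ = K − m` and
`c = P(A̲(K−m) = a_m)`, so `θ_rsw^(m) = 𝔼[Y^{1_m}] − 𝔼[Y^{0_m}]`. Expanding both expectations over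
the strata `Ā(K−m−1) = b̄` with (A5), and using that the MSM coefficients are the
stratum-probability mixtures of the conditional ones, gives `Σ_{j ≤ m} ψ_j`. The ordering follows
from `ψ_j ≥ 0` and `0 < q_j < 1`.
-/

open scoped ENNReal

section MeasureTheory

variable {Ω : Type*} [MeasurableSpace Ω] {μ : Measure Ω}

theorem setIntegral_preimage_eq_sum {β : Type*} {f : Ω → ℝ} (H : Ω → β) (T : Finset β)
    (hH : ∀ x ∈ T, MeasurableSet (H ⁻¹' {x})) (hf : ∀ x ∈ T, IntegrableOn f (H ⁻¹' {x}) μ) :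
    ∫ ω in H ⁻¹' T, f ω ∂μ = ∑ x ∈ T, ∫ ω in H ⁻¹' {x}, f ω ∂μ := by
  rw [← Set.biUnion_preimage_singleton]
  exact integral_biUnion_finset T hH (Set.pairwiseDisjoint_fiber H _) hf

theorem integral_eq_toReal_mul_of_map_eq_smul {ν : Measure Ω} {Z : Ω → ℝ}
    (hμ : AEMeasurable Z μ) (hν : AEMeasurable Z ν) {r : ℝ≥0∞}
    (h : μ.map Z = r • ν.map Z) : ∫ ω, Z ω ∂μ = r.toReal * ∫ ω, Z ω ∂ν := by
  have hmap : ∀ ρ : Measure Ω, AEMeasurable Z ρ → ∫ y, y ∂(ρ.map Z) = ∫ ω, Z ω ∂ρ :=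
    fun ρ hρ => integral_map hρ aestronglyMeasurable_id
  rw [← hmap μ hμ, h, integral_smul_measure, hmap ν hν, smul_eq_mul]

theorem integrable_comp_mul_of_finite {α : Type*} [MeasurableSpace α] [Finite α]
    [MeasurableSingletonClass α] {H : Ω → α} (hH : Measurable H) (F : α → ℝ) {Z : Ω → ℝ}
    (hZ : Integrable Z μ) : Integrable (fun ω => F (H ω) * Z ω) μ := by
  obtain ⟨C, hC⟩ := (Set.finite_range fun x => ‖F x‖).bddAbove
  exact hZ.bdd_mul ((measurable_of_finite F).comp hH).aestronglyMeasurable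
    (c := C) (Filter.Eventually.of_forall fun ω => hC ⟨H ω, rfl⟩)

end MeasureTheory

section Events

variable {Ω : Type*} {𝓛 : Type*} {K : ℕ}
  {A : Fin K → Ω → Bool} {L : Fin K → Ω → 𝓛}

def tails (K m : ℕ) (a : Bool) : Finset (Fin K → Bool) :=
  univ.filter fun b => ∀ k : Fin K, K - m ≤ (k : ℕ) → b k = a

def withTail (m : ℕ) (a : Bool) (b : Fin K → Bool) : Fin K → Bool :=
  fun k => if K - m ≤ (k : ℕ) then a else b k

theorem withTail_mem_tails (m : ℕ) (a : Bool) (b : Fin K → Bool) :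
    withTail m a b ∈ tails K m a := by
  simp +contextual [tails, withTail]

theorem preimage_swap_singleton (b : Fin K → Bool) :
    Function.swap A ⁻¹' {b} = Apast A K b := by
  ext ω
  simp [Apast, funext_iff, Function.swap]

theorem Etr_eq_preimage_tails (m : ℕ) (a : Bool) :
    Etr A m a = Function.swap A ⁻¹' ↑(tails K m a) := by
  ext ω
  simp [Etr, EtrV, tails, Function.swap]

theorem preimage_withTail_singleton {m : ℕ} {a : Bool} {b : Fin K → Bool}
    (hb : b ∈ tails K m a) :
    (fun ω => withTail m a (Function.swap A ω)) ⁻¹' {b} = Apast A (K - m) b := by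
  simp only [tails, Finset.mem_filter, Finset.mem_univ, true_and] at hb
  ext ω
  simp only [Set.mem_preimage, Set.mem_singleton_iff, funext_iff, withTail, Apast,
    Set.mem_ofPred_eq, Function.swap]
  refine ⟨fun h k hk => by simpa [show ¬ K - m ≤ (k : ℕ) by omega] using h k, fun h k => ?_⟩
  split_ifs with hk
  · exact (hb k hk).symm
  · exact h k (by omega)

theorem preimage_withTail_tails (m : ℕ) (a : Bool) :
    (fun ω => withTail m a (Function.swap A ω)) ⁻¹' ↑(tails K m a) = Set.univ :=
  Set.eq_univ_of_forall fun _ => withTail_mem_tails m a _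

theorem Aseg_eq_Etr {m : ℕ} {a : Bool} {b : Fin K → Bool} (hb : b ∈ tails K m a) :
    Aseg A (K - m) K b = Etr A m a := by
  simp only [tails, Finset.mem_filter, Finset.mem_univ, true_and] at hb
  ext ω
  simp only [Aseg, Etr, EtrV, Set.mem_ofPred_eq]
  exact ⟨fun h k hk => (h k hk k.isLt).trans (hb k hk),
    fun h k hk _ => (h k hk).trans (hb k hk).symm⟩

theorem Apast_eq_Aseg_zero (t : ℕ) (b : Fin K → Bool) : Apast A t b = Aseg A 0 t b := by
  ext ω
  simp [Apast, Aseg]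

theorem Aseg_succ {t0 s : ℕ} (hs : s < K) (b : Fin K → Bool) :
    Aseg A t0 (s + 1) b =
      {ω | t0 ≤ s → A ⟨s, hs⟩ ω = b ⟨s, hs⟩} ∩ Aseg A t0 s b := by
  ext ω
  simp only [Aseg, Set.mem_ofPred_eq, Set.mem_inter_iff]
  refine ⟨fun h => ⟨fun hts => h _ hts (by simp), fun k hk hks => h k hk (by omega)⟩,
    fun ⟨hs', h⟩ k hk hks => ?_⟩
  rcases Nat.lt_succ_iff_lt_or_eq.1 hks with hks | hks
  · exact h k hk hks
  · obtain rfl : k = ⟨s, hs⟩ := Fin.ext hks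
    exact hs' hk

theorem Apast_zero (b : Fin K → Bool) : Apast A 0 b = Set.univ := by
  ext ω
  simp [Apast]

theorem withTail_withTail (m : ℕ) (a a' : Bool) (b : Fin K → Bool) :
    withTail m a (withTail m a' b) = withTail m a b := by
  ext k
  simp +contextual [withTail]

theorem Apast_succ {s : ℕ} (hs : s < K) (b : Fin K → Bool) :
    Apast A (s + 1) b = {ω | A ⟨s, hs⟩ ω = b ⟨s, hs⟩} ∩ Apast A s b := by
  simp [Apast_eq_Aseg_zero, Aseg_succ hs]

theorem Lpast_congr {t : ℕ} {l l' : Fin K → 𝓛} (h : ∀ k : Fin K, (k : ℕ) ≤ t → l k = l' k) :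
    Lpast L t l = Lpast L t l' := by
  ext ω
  exact forall_congr' fun k => imp_congr_right fun hk => by rw [h k hk]

end Events

section Probability

variable {Ω : Type*} [MeasurableSpace Ω] {𝓛 : Type*} {K : ℕ}
  {A : Fin K → Ω → Bool} {L : Fin K → Ω → 𝓛} {P : Measure Ω}

theorem measurableSet_Apast (hA : ∀ k, Measurable (A k)) (t : ℕ) (b : Fin K → Bool) :
    MeasurableSet (Apast A t b) := by
  simp only [Apast, Set.ofPred_forall]
  exact .iInter fun k => .iInter fun _ => hA k (measurableSet_singleton _)

theorem measurableSet_Lpast [MeasurableSpace 𝓛] [MeasurableSingletonClass 𝓛]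
    (hL : ∀ k, Measurable (L k)) (t : ℕ) (l : Fin K → 𝓛) : MeasurableSet (Lpast L t l) := by
  simp only [Lpast, Set.ofPred_forall]
  exact .iInter fun k => .iInter fun _ => hL k (measurableSet_singleton _)

theorem measureReal_inter_eq_cP_mul [IsFiniteMeasure P] (E F : Set Ω) :
    P.real (E ∩ F) = cP P E F * P.real F :=
  (div_mul_cancel_of_imp fun h => measureReal_mono_null Set.inter_subset_right h).symm

theorem cP_eq_one_of_subset [IsFiniteMeasure P] {E F : Set Ω} (hFE : F ⊆ E) (hF : P F ≠ 0) :
    cP P E F = 1 := by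
  rw [cP, Set.inter_eq_right.2 hFE]
  exact div_self (ENNReal.toReal_ne_zero.2 ⟨hF, measure_ne_top P F⟩)

theorem cP_eq_zero_of_disjoint {E F : Set Ω} (h : Disjoint E F) : cP P E F = 0 := by
  simp [cP, h.inter_eq]

theorem measureReal_Aseg [IsProbabilityMeasure P] (b : Fin K → Bool) (t0 : ℕ) {s : ℕ}
    (hs : s ≤ K) :
    P.real (Aseg A t0 s b) = ∏ k ∈ univ.filter (fun k : Fin K => t0 ≤ (k : ℕ) ∧ (k : ℕ) < s),
      cP P {ω | A k ω = b k} (Aseg A t0 k b) := by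
  induction s with
  | zero => simp [Aseg]
  | succ s ih =>
    rw [Aseg_succ (show s < K by omega)]
    by_cases hts : t0 ≤ s
    · have hfilter : univ.filter (fun k : Fin K => t0 ≤ (k : ℕ) ∧ (k : ℕ) < s + 1) =
          insert ⟨s, by omega⟩ (univ.filter fun k : Fin K => t0 ≤ (k : ℕ) ∧ (k : ℕ) < s) := by
        ext k
        simp only [Finset.mem_filter, Finset.mem_univ, true_and, Finset.mem_insert, Fin.ext_iff]
        omega
      rw [hfilter, Finset.prod_insert (by simp), ← ih (by omega),
        ← measureReal_inter_eq_cP_mul]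
      simp [hts]
    · have hfilter : univ.filter (fun k : Fin K => t0 ≤ (k : ℕ) ∧ (k : ℕ) < s + 1) =
          univ.filter fun k : Fin K => t0 ≤ (k : ℕ) ∧ (k : ℕ) < s := by
        ext k
        simp only [Finset.mem_filter, Finset.mem_univ, true_and]
        omega
      rw [hfilter, ← ih (by omega)]
      simp [hts]

end Probability

section Exchangeability

variable {Ω : Type*} [MeasurableSpace Ω] {𝓛 : Type*} {K : ℕ}
  {A : Fin K → Ω → Bool} {L : Fin K → Ω → 𝓛} {P : Measure Ω}

noncomputable def propensity (P : Measure Ω) (A : Fin K → Ω → Bool) (L : Fin K → Ω → 𝓛) (k : Fin K)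
    (l : Fin K → 𝓛) (b : Fin K → Bool) : ℝ :=
  cP P {ω | A k ω = b k} (Lpast L k l ∩ Apast A k b)

theorem propensity_congr {k : Fin K} {l l' : Fin K → 𝓛}
    (h : ∀ j : Fin K, (j : ℕ) ≤ k → l j = l' j) (b : Fin K → Bool) :
    propensity P A L k l b = propensity P A L k l' b := by
  rw [propensity, propensity, Lpast_congr h]

/-- `Z` is mean-independent of each treatment `A(t)` given `(L̄(t), Ā(t−1))`, along the
treatment path `a`. -/
def SeqMeanExchangeable (P : Measure Ω) (A : Fin K → Ω → Bool) (L : Fin K → Ω → 𝓛)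
    (Z : Ω → ℝ) (a : Fin K → Bool) : Prop :=
  ∀ (t : Fin K) (l : Fin K → 𝓛), 0 < P (Lpast L t l ∩ Apast A t a) →
    ∫ ω in {ω | A t ω = a t} ∩ (Lpast L t l ∩ Apast A t a), Z ω ∂P =
      propensity P A L t l a * ∫ ω in Lpast L t l ∩ Apast A t a, Z ω ∂P

theorem seqMeanExchangeable_const [IsFiniteMeasure P] (c : ℝ) (a : Fin K → Bool) :
    SeqMeanExchangeable P A L (fun _ => c) a := by
  intro t l _
  simp only [setIntegral_const, smul_eq_mul, propensity]
  rw [measureReal_inter_eq_cP_mul, mul_assoc]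

theorem A2ok.seqMeanExchangeable [IsFiniteMeasure P] [MeasurableSpace 𝓛]
    [MeasurableSingletonClass 𝓛] (hA : ∀ k, Measurable (A k)) (hL : ∀ k, Measurable (L k))
    {Ypot : (Fin K → Bool) → Ω → ℝ} (hA2 : A2ok P A L Ypot)
    (hYpot : ∀ a, AEMeasurable (Ypot a) P) (a' a : Fin K → Bool) :
    SeqMeanExchangeable P A L (Ypot a') a := by
  intro t l hC
  set C := Lpast L t l ∩ Apast A t a
  set E := {ω | A t ω = a t}
  set π := propensity P A L t l a
  have hCm : MeasurableSet C := (measurableSet_Lpast hL _ l).inter (measurableSet_Apast hA _ a)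
  have hECm : MeasurableSet (E ∩ C) := (hA t (measurableSet_singleton _)).inter hCm
  have hπ : 0 ≤ π := div_nonneg ENNReal.toReal_nonneg ENNReal.toReal_nonneg
  -- (A2) at the level of measures: `P(Y ∈ B, A(t) = a(t), C) = π · P(Y ∈ B, C)`
  have hfactor : ∀ B : Set ℝ, MeasurableSet B →
      P (Ypot a' ⁻¹' B ∩ (E ∩ C)) = ENNReal.ofReal π * P (Ypot a' ⁻¹' B ∩ C) := by
    intro B hB
    have hreal : P.real (Ypot a' ⁻¹' B ∩ E ∩ C) = π * P.real (Ypot a' ⁻¹' B ∩ C) := by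
      have hA2' : cP P (Ypot a' ⁻¹' B ∩ E) C = cP P (Ypot a' ⁻¹' B) C * π :=
        hA2 t a' B hB (a t) l a hC
      rw [measureReal_inter_eq_cP_mul _ C, hA2', measureReal_inter_eq_cP_mul (Ypot a' ⁻¹' B) C]
      ring
    rw [← Set.inter_assoc, ← ENNReal.ofReal_toReal (measure_ne_top P (Ypot a' ⁻¹' B ∩ E ∩ C)),
      ← measureReal_def, hreal, ENNReal.ofReal_mul hπ, measureReal_def,
      ENNReal.ofReal_toReal (measure_ne_top _ _)]
  have hmap :
      (P.restrict (E ∩ C)).map (Ypot a') = ENNReal.ofReal π • (P.restrict C).map (Ypot a') := by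
    ext B hB
    rw [Measure.map_apply_of_aemeasurable (hYpot a').restrict hB, Measure.smul_apply,
      Measure.map_apply_of_aemeasurable (hYpot a').restrict hB, Measure.restrict_apply' hECm,
      Measure.restrict_apply' hCm, smul_eq_mul, hfactor B hB]
  rw [integral_eq_toReal_mul_of_map_eq_smul (hYpot a').restrict (hYpot a').restrict hmap,
    ENNReal.toReal_ofReal hπ]

theorem setIntegral_Lpast_inter_Apast_succ [MeasurableSpace 𝓛] [MeasurableSingletonClass 𝓛]
    (hA : ∀ k, Measurable (A k)) (hL : ∀ k, Measurable (L k)) (hA3 : A3ok P A L)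
    {Z : Ω → ℝ} {a : Fin K → Bool} (hZ : SeqMeanExchangeable P A L Z a) {s : ℕ} (hs : s < K)
    (g : (Fin K → 𝓛) → ℝ) (hg : ∀ l l', (∀ k : Fin K, (k : ℕ) ≤ s → l k = l' k) → g l = g l')
    (l : Fin K → 𝓛)
    (hC : 0 < P (Lpast L s l ∩ Apast A s a)) :
    ∫ ω in Lpast L s l ∩ Apast A (s + 1) a,
        (propensity P A L ⟨s, hs⟩ (Function.swap L ω) a)⁻¹ * g (Function.swap L ω) * Z ω ∂P =
      ∫ ω in Lpast L s l ∩ Apast A s a, g (Function.swap L ω) * Z ω ∂P := by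
  set t : Fin K := ⟨s, hs⟩
  set π : (Fin K → 𝓛) → ℝ := fun l => propensity P A L t l a
  set C := Lpast L s l ∩ Apast A s a
  have hCm : MeasurableSet C := (measurableSet_Lpast hL s l).inter (measurableSet_Apast hA s a)
  have hAt : MeasurableSet {ω | A t ω = a t} := hA t (measurableSet_singleton _)
  have hconst : ∀ ω ∈ C, g (Function.swap L ω) = g l ∧ π (Function.swap L ω) = π l := by
    intro ω hω
    have hagree : ∀ k : Fin K, (k : ℕ) ≤ s → Function.swap L ω k = l k := fun k hk => hω.1 k hk
    exact ⟨hg _ _ hagree, propensity_congr hagree a⟩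
  have hπ : π l ≠ 0 := (hA3 t (a t) l a hC).ne'
  rw [Apast_succ hs, Set.inter_left_comm,
    setIntegral_congr_fun (hAt.inter hCm) (g := fun ω => (π l)⁻¹ * g l * Z ω)
      (fun ω hω => by
        rw [(hconst ω hω.2).1, show propensity P A L t _ a = π l from (hconst ω hω.2).2]),
    setIntegral_congr_fun hCm (g := fun ω => g l * Z ω)
      (fun ω hω => by simp only [(hconst ω hω).1]),
    integral_const_mul, integral_const_mul, hZ t l hC]
  change (π l)⁻¹ * g l * (π l * ∫ ω in C, Z ω ∂P) = g l * ∫ ω in C, Z ω ∂P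
  field_simp

end Exchangeability

section Weights

variable {Ω : Type*} [MeasurableSpace Ω] {𝓛 : Type*} {K : ℕ}
  {A : Fin K → Ω → Bool} {L : Fin K → Ω → 𝓛} {P : Measure Ω}

theorem Wsw_eq [IsProbabilityMeasure P] (ω : Ω) :
    Wsw P A L ω = P.real (Apast A K (Function.swap A ω)) *
      ∏ k ∈ univ.filter (fun k : Fin K => 0 ≤ (k : ℕ) ∧ (k : ℕ) < K),
        (propensity P A L k (Function.swap L ω) (Function.swap A ω))⁻¹ := by
  have hfilter : univ.filter (fun k : Fin K => 0 ≤ (k : ℕ) ∧ (k : ℕ) < K) = univ := by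
    ext k
    simp
  rw [Apast_eq_Aseg_zero, measureReal_Aseg _ 0 le_rfl, hfilter, ← Finset.prod_mul_distrib]
  refine Finset.prod_congr rfl fun k _ => ?_
  rw [div_eq_mul_inv]
  congr 1
  rw [Apast_eq_Aseg_zero]

theorem Wrsw_eq [IsProbabilityMeasure P] (m : ℕ) (ω : Ω) :
    Wrsw P A L m ω = P.real (Aseg A (K - m) K (Function.swap A ω)) *
      ∏ k ∈ univ.filter (fun k : Fin K => K - m ≤ (k : ℕ) ∧ (k : ℕ) < K),
        (propensity P A L k (Function.swap L ω) (Function.swap A ω))⁻¹ := by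
  have hfilter : univ.filter (fun k : Fin K => K - m ≤ (k : ℕ) ∧ (k : ℕ) < K) =
      univ.filter (fun k : Fin K => K - m ≤ (k : ℕ)) := by
    ext k
    simp
  rw [measureReal_Aseg _ (K - m) le_rfl, hfilter, ← Finset.prod_mul_distrib]
  refine Finset.prod_congr rfl fun k _ => ?_
  rw [div_eq_mul_inv]
  rfl

end Weights

section GFormula

variable {Ω : Type*} [MeasurableSpace Ω] {𝓛 : Type*} [MeasurableSpace 𝓛] [Fintype 𝓛]
  [MeasurableSingletonClass 𝓛] {K : ℕ} {A : Fin K → Ω → Bool} {L : Fin K → Ω → 𝓛}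
  {P : Measure Ω}

theorem setIntegral_Apast_succ (hA : ∀ k, Measurable (A k)) (hL : ∀ k, Measurable (L k))
    (hA3 : A3ok P A L) {Z : Ω → ℝ} (hZi : Integrable Z P) {a : Fin K → Bool}
    (hZ : SeqMeanExchangeable P A L Z a) {s : ℕ} (hs : s < K) (g : (Fin K → 𝓛) → ℝ)
    (hg : ∀ l l', (∀ k : Fin K, (k : ℕ) ≤ s → l k = l' k) → g l = g l') :
    ∫ ω in Apast A (s + 1) a,
        (propensity P A L ⟨s, hs⟩ (Function.swap L ω) a)⁻¹ * g (Function.swap L ω) * Z ω ∂P =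
      ∫ ω in Apast A s a, g (Function.swap L ω) * Z ω ∂P := by
  -- Cut along the value of `L̄(s)`: a cell of positive probability is some `Lpast L s l`.
  set H : Ω → ({k : Fin K // (k : ℕ) ≤ s} → 𝓛) := fun ω k => L k ω
  have hH : ∀ x, MeasurableSet (H ⁻¹' {x}) := fun x =>
    measurable_pi_lambda H (fun k => hL k.1) (measurableSet_singleton x)
  have hsplit : ∀ (S : Set Ω) (f : (Fin K → 𝓛) → ℝ),
      ∫ ω in S, f (Function.swap L ω) * Z ω ∂P =
        ∑ x, ∫ ω in H ⁻¹' {x} ∩ S, f (Function.swap L ω) * Z ω ∂P := by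
    intro S f
    have hint := (integrable_comp_mul_of_finite (measurable_pi_lambda _ hL) f hZi).restrict (s := S)
    rw [← Measure.restrict_univ (μ := P.restrict S), ← Set.preimage_univ (f := H),
      ← Finset.coe_univ, setIntegral_preimage_eq_sum H _ (fun x _ => hH x)
        (fun x _ => hint.integrableOn)]
    simp only [Measure.restrict_restrict (hH _)]
  rw [hsplit _ fun l => (propensity P A L ⟨s, hs⟩ l a)⁻¹ * g l, hsplit _ g]
  refine Finset.sum_congr rfl fun x _ => ?_
  by_cases h0 : P (H ⁻¹' {x} ∩ Apast A s a) = 0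
  · rw [setIntegral_measure_zero _ h0, setIntegral_measure_zero _ (measure_mono_null
      (Set.inter_subset_inter_right _ (by rw [Apast_succ hs]; exact Set.inter_subset_right)) h0)]
  obtain ⟨ω₀, hω₀, -⟩ := nonempty_of_measure_ne_zero h0
  obtain rfl : H ω₀ = x := hω₀
  have hfiber : H ⁻¹' {H ω₀} = Lpast L s (Function.swap L ω₀) := by
    ext ω
    simp [funext_iff, Lpast, H, Function.swap]
  rw [hfiber] at h0 ⊢
  exact setIntegral_Lpast_inter_Apast_succ hA hL hA3 hZ hs g hg _ (pos_iff_ne_zero.2 h0)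

theorem setIntegral_Apast_ipw (hA : ∀ k, Measurable (A k)) (hL : ∀ k, Measurable (L k))
    (hA3 : A3ok P A L) {Z : Ω → ℝ} (hZi : Integrable Z P) {a : Fin K → Bool}
    (hZ : SeqMeanExchangeable P A L Z a) {t0 s : ℕ} (hts : t0 ≤ s) (hs : s ≤ K) :
    ∫ ω in Apast A s a, (∏ k ∈ univ.filter (fun k : Fin K => t0 ≤ (k : ℕ) ∧ (k : ℕ) < s),
        (propensity P A L k (Function.swap L ω) a)⁻¹) * Z ω ∂P =
      ∫ ω in Apast A t0 a, Z ω ∂P := by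
  induction s, hts using Nat.le_induction with
  | base =>
    have hempty : univ.filter (fun k : Fin K => t0 ≤ (k : ℕ) ∧ (k : ℕ) < t0) = ∅ := by
      ext k
      simp only [Finset.mem_filter, Finset.mem_univ, true_and, Finset.notMem_empty, iff_false]
      omega
    simp [hempty]
  | succ s hts ih =>
    have hfilter : univ.filter (fun k : Fin K => t0 ≤ (k : ℕ) ∧ (k : ℕ) < s + 1) =
        insert ⟨s, by omega⟩ (univ.filter fun k : Fin K => t0 ≤ (k : ℕ) ∧ (k : ℕ) < s) := by
      ext k
      simp only [Finset.mem_filter, Finset.mem_univ, true_and, Finset.mem_insert, Fin.ext_iff]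
      omega
    have hnew : (⟨s, by omega⟩ : Fin K) ∉
        univ.filter (fun k : Fin K => t0 ≤ (k : ℕ) ∧ (k : ℕ) < s) := by simp
    simp only [hfilter, Finset.prod_insert hnew]
    refine (setIntegral_Apast_succ hA hL hA3 hZi hZ (by omega)
      (fun l => ∏ k ∈ univ.filter (fun k : Fin K => t0 ≤ (k : ℕ) ∧ (k : ℕ) < s),
        (propensity P A L k l a)⁻¹) fun l l' h => ?_).trans (ih (by omega))
    refine Finset.prod_congr rfl fun k hk => ?_
    rw [propensity_congr fun j hj => h j (by simp at hk; omega)]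

theorem integrable_Wsw_mul (hA : ∀ k, Measurable (A k)) (hL : ∀ k, Measurable (L k))
    {Z : Ω → ℝ} (hZ : Integrable Z P) : Integrable (fun ω => Wsw P A L ω * Z ω) P :=
  integrable_comp_mul_of_finite ((measurable_pi_lambda _ hL).prodMk (measurable_pi_lambda _ hA))
    (fun h : (Fin K → 𝓛) × (Fin K → Bool) => ∏ k : Fin K,
      cP P {ω' | A k ω' = h.2 k} (Apast A k h.2) /
        cP P {ω' | A k ω' = h.2 k} (Lpast L k h.1 ∩ Apast A k h.2)) hZ

theorem integrable_Wrsw_mul (hA : ∀ k, Measurable (A k)) (hL : ∀ k, Measurable (L k))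
    (m : ℕ) {Z : Ω → ℝ} (hZ : Integrable Z P) : Integrable (fun ω => Wrsw P A L m ω * Z ω) P :=
  integrable_comp_mul_of_finite ((measurable_pi_lambda _ hL).prodMk (measurable_pi_lambda _ hA))
    (fun h : (Fin K → 𝓛) × (Fin K → Bool) =>
      ∏ k ∈ univ.filter (fun k : Fin K => K - m ≤ (k : ℕ)),
        cP P {ω' | A k ω' = h.2 k} (Aseg A (K - m) k h.2) /
          cP P {ω' | A k ω' = h.2 k} (Lpast L k h.1 ∩ Apast A k h.2)) hZ

theorem setIntegral_Apast_weight_mul (hA : ∀ k, Measurable (A k))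
    (hL : ∀ k, Measurable (L k)) (hA3 : A3ok P A L) {W Z : Ω → ℝ} (hZi : Integrable Z P)
    {b : Fin K → Bool} (hZ : SeqMeanExchangeable P A L Z b) {t0 : ℕ} (ht0 : t0 ≤ K) {c : ℝ}
    (hW : ∀ ω ∈ Apast A K b, W ω = c * ∏ k ∈ univ.filter
      (fun k : Fin K => t0 ≤ (k : ℕ) ∧ (k : ℕ) < K), (propensity P A L k (Function.swap L ω) b)⁻¹) :
    ∫ ω in Apast A K b, W ω * Z ω ∂P = c * ∫ ω in Apast A t0 b, Z ω ∂P := by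
  rw [setIntegral_congr_fun (measurableSet_Apast hA K b) fun ω hω => by rw [hW ω hω, mul_assoc],
    integral_const_mul, setIntegral_Apast_ipw hA hL hA3 hZi hZ ht0 le_rfl]

theorem integral_withTail_eq_sum (hA : ∀ k, Measurable (A k)) {Z : (Fin K → Bool) → Ω → ℝ}
    (hZi : ∀ b, Integrable (Z b) P) (m : ℕ) (a : Bool) :
    ∫ ω, Z (withTail m a (Function.swap A ω)) ω ∂P =
      ∑ b ∈ tails K m a, ∫ ω in Apast A (K - m) b, Z b ω ∂P := by
  have hon : ∀ b ∈ tails K m a, Set.EqOn (fun ω => Z (withTail m a (Function.swap A ω)) ω)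
      (Z b) (Apast A (K - m) b) := fun b hb ω hω => by
    rw [← preimage_withTail_singleton hb] at hω
    simp only [hω.symm]
  have hsum := setIntegral_preimage_eq_sum (μ := P)
    (f := fun ω => Z (withTail m a (Function.swap A ω)) ω) _ (tails K m a)
    (fun b hb => preimage_withTail_singleton hb ▸ measurableSet_Apast hA _ b)
    (fun b hb => preimage_withTail_singleton hb ▸
      (hZi b).integrableOn.congr_fun (hon b hb).symm (measurableSet_Apast hA _ b))
  rw [preimage_withTail_tails, Measure.restrict_univ] at hsum
  rw [hsum]
  refine Finset.sum_congr rfl fun b hb => ?_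
  rw [preimage_withTail_singleton hb, setIntegral_congr_fun (measurableSet_Apast hA _ b) (hon b hb)]

theorem setIntegral_preimage_Wsw_mul [IsProbabilityMeasure P] (hA : ∀ k, Measurable (A k))
    (hL : ∀ k, Measurable (L k)) (hA3 : A3ok P A L) {Z : (Fin K → Bool) → Ω → ℝ}
    (hZi : ∀ b, Integrable (Z b) P) (hZ : ∀ b, SeqMeanExchangeable P A L (Z b) b)
    (T : Finset (Fin K → Bool)) :
    ∫ ω in Function.swap A ⁻¹' T, Wsw P A L ω * Z (Function.swap A ω) ω ∂P =
      ∫ ω in Function.swap A ⁻¹' T, (∫ ω', Z (Function.swap A ω) ω' ∂P) ∂P := by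
  have hfiber : ∀ b, MeasurableSet (Function.swap A ⁻¹' {b}) := fun b => by
    rw [preimage_swap_singleton]
    exact measurableSet_Apast hA K b
  rw [setIntegral_preimage_eq_sum _ T (fun b _ => hfiber b) fun b _ =>
      (integrable_Wsw_mul hA hL (hZi b)).integrableOn.congr_fun
        (fun ω (hω : Function.swap A ω = b) => by rw [hω]) (hfiber b),
    setIntegral_preimage_eq_sum _ T (fun b _ => hfiber b) fun b _ =>
      (integrableOn_const (C := ∫ ω', Z b ω' ∂P)).congr_fun
        (fun ω (hω : Function.swap A ω = b) => by rw [hω]) (hfiber b)]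
  refine Finset.sum_congr rfl fun b _ => ?_
  rw [setIntegral_congr_fun (hfiber b) (g := fun ω => Wsw P A L ω * Z b ω)
      fun ω (hω : Function.swap A ω = b) => by rw [hω],
    setIntegral_congr_fun (hfiber b) (f := fun ω => ∫ ω', Z (Function.swap A ω) ω' ∂P)
      (g := fun _ => ∫ ω', Z b ω' ∂P)
      fun ω (hω : Function.swap A ω = b) => by simp only [hω],
    setIntegral_const, smul_eq_mul, preimage_swap_singleton,
    setIntegral_Apast_weight_mul hA hL hA3 (hZi b) (hZ b) (Nat.zero_le K) fun ω hω => ?_,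
    Apast_zero, Measure.restrict_univ]
  rw [← preimage_swap_singleton] at hω
  rw [Wsw_eq, show Function.swap A ω = b from hω]

theorem setIntegral_Etr_Wrsw_mul [IsProbabilityMeasure P] (hA : ∀ k, Measurable (A k))
    (hL : ∀ k, Measurable (L k)) (hA3 : A3ok P A L) {Z : (Fin K → Bool) → Ω → ℝ}
    (hZi : ∀ b, Integrable (Z b) P) (hZ : ∀ b, SeqMeanExchangeable P A L (Z b) b)
    (m : ℕ) (a : Bool) :
    ∫ ω in Etr A m a, Wrsw P A L m ω * Z (Function.swap A ω) ω ∂P =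
      P.real (Etr A m a) * ∫ ω, Z (withTail m a (Function.swap A ω)) ω ∂P := by
  have hfiber : ∀ b, MeasurableSet (Function.swap A ⁻¹' {b}) := fun b => by
    rw [preimage_swap_singleton]
    exact measurableSet_Apast hA K b
  rw [integral_withTail_eq_sum hA hZi, Finset.mul_sum, Etr_eq_preimage_tails,
    setIntegral_preimage_eq_sum _ _ (fun b _ => hfiber b) fun b _ =>
      (integrable_Wrsw_mul hA hL m (hZi b)).integrableOn.congr_fun
        (fun ω (hω : Function.swap A ω = b) => by rw [hω]) (hfiber b)]
  refine Finset.sum_congr rfl fun b hb => ?_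
  rw [setIntegral_congr_fun (hfiber b) (g := fun ω => Wrsw P A L m ω * Z b ω)
      fun ω (hω : Function.swap A ω = b) => by rw [hω], preimage_swap_singleton,
    setIntegral_Apast_weight_mul hA hL hA3 (hZi b) (hZ b) (Nat.sub_le K m) fun ω hω => ?_,
    ← Etr_eq_preimage_tails]
  rw [← preimage_swap_singleton] at hω
  rw [Wrsw_eq, show Function.swap A ω = b from hω, Aseg_eq_Etr hb]

end GFormula

section LinearModel

variable {K : ℕ}

def msmMean (ψ0 : ℝ) (ψ : Fin K → ℝ) (a : Fin K → Bool) : ℝ :=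
  ψ0 + ∑ j : Fin K, ψ j * if a (rev j) = true then 1 else 0

theorem MSMeq.integral_eq {Ω : Type*} [MeasurableSpace Ω] {P : Measure Ω}
    {Ypot : (Fin K → Bool) → Ω → ℝ} {ψ0 : ℝ} {ψ : Fin K → ℝ} (hMSM : MSMeq P Ypot ψ0 ψ)
    (a : Fin K → Bool) : ∫ ω, Ypot a ω ∂P = msmMean ψ0 ψ a :=
  hMSM a

theorem rev_involutive : Function.Involutive (rev : Fin K → Fin K) := fun j => by
  ext
  simp only [rev]
  omega

theorem msmMean_const_false (ψ0 : ℝ) (ψ : Fin K → ℝ) : msmMean ψ0 ψ (fun _ => false) = ψ0 := by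
  simp [msmMean]

theorem msmMean_const_true_sub_const_false (ψ0 : ℝ) (ψ : Fin K → ℝ) :
    msmMean ψ0 ψ (fun _ => true) - msmMean ψ0 ψ (fun _ => false) = ∑ j, ψ j := by
  simp [msmMean]

theorem msmMean_single (ψ0 : ℝ) (ψ : Fin K → ℝ) (j : Fin K) :
    msmMean ψ0 ψ (fun k => decide (k = rev j)) = ψ0 + ψ j := by
  simp [msmMean, rev_involutive.injective.eq_iff]

theorem msmMean_coeff_unique {c0 d0 : ℝ} {c d : Fin K → ℝ}
    (h : ∀ a, msmMean c0 c a = msmMean d0 d a) : c = d := by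
  funext j
  have h0 := h fun _ => false
  have hj := h fun k => decide (k = rev j)
  rw [msmMean_const_false, msmMean_const_false] at h0
  rw [msmMean_single, msmMean_single] at hj
  linarith

theorem sum_mul_msmMean {β : Type*} (s : Finset β) (w c0 : β → ℝ) (c : β → Fin K → ℝ)
    (a : Fin K → Bool) :
    ∑ b ∈ s, w b * msmMean (c0 b) (c b) a =
      msmMean (∑ b ∈ s, w b * c0 b) (fun j => ∑ b ∈ s, w b * c b j) a := by
  simp only [msmMean, mul_add, Finset.sum_add_distrib, Finset.mul_sum, Finset.sum_mul]
  rw [Finset.sum_comm]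
  simp only [mul_assoc]

theorem msmMean_withTail_true_sub_false (ψ0 : ℝ) (ψ : Fin K → ℝ) (m : ℕ) (b : Fin K → Bool) :
    msmMean ψ0 ψ (withTail m true b) - msmMean ψ0 ψ (withTail m false b) =
      ∑ j ∈ univ.filter (fun j : Fin K => (j : ℕ) < m), ψ j := by
  rw [msmMean, msmMean, add_sub_add_left_eq_sub, ← Finset.sum_sub_distrib, Finset.sum_filter]
  refine Finset.sum_congr rfl fun j _ => ?_
  have := j.isLt
  by_cases hj : (j : ℕ) < m
  · simp [withTail, rev, hj, show K - m ≤ K - 1 - (j : ℕ) by omega]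
  · simp [withTail, rev, hj, show ¬ K - m ≤ K - 1 - (j : ℕ) by omega]

end LinearModel

section Estimands

variable {Ω : Type*} [MeasurableSpace Ω] {𝓛 : Type*} [MeasurableSpace 𝓛] [Fintype 𝓛]
  [MeasurableSingletonClass 𝓛] {K : ℕ} {A : Fin K → Ω → Bool} {L : Fin K → Ω → 𝓛}
  {P : Measure Ω} {Y : Ω → ℝ} {Ypot : (Fin K → Bool) → Ω → ℝ}

theorem setIntegral_msmMean [IsFiniteMeasure P] (hA : ∀ k, Measurable (A k)) (S : Set Ω)
    (ψ0 : ℝ) (ψ : Fin K → ℝ) :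
    ∫ ω in S, msmMean ψ0 ψ (Function.swap A ω) ∂P =
      ψ0 * P.real S + ∑ j, ψ j * P.real ({ω | A (rev j) ω = true} ∩ S) := by
  have hind : ∀ j : Fin K, (fun ω => if Function.swap A ω (rev j) = true then (1 : ℝ) else 0) =
      Set.indicator {ω | A (rev j) ω = true} 1 := fun j => by
    ext ω
    simp [Set.indicator, Function.swap]
  have hmeas : ∀ j : Fin K, MeasurableSet {ω | A (rev j) ω = true} :=
    fun j => hA (rev j) (measurableSet_singleton true)
  simp only [msmMean]
  rw [integral_add (integrable_const _) (integrable_finsetSum _ fun j _ =>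
      ((hind j ▸ (integrable_const (1 : ℝ)).indicator (hmeas j)).const_mul (ψ j)).restrict),
    integral_finsetSum _ fun j _ =>
      ((hind j ▸ (integrable_const (1 : ℝ)).indicator (hmeas j)).const_mul (ψ j)).restrict,
    setIntegral_const, smul_eq_mul, mul_comm]
  refine congrArg _ (Finset.sum_congr rfl fun j _ => ?_)
  rw [integral_const_mul, hind, setIntegral_indicator (hmeas j), Pi.one_def, setIntegral_const,
    smul_eq_mul, mul_one, Set.inter_comm]

theorem setIntegral_Etr_Wsw [IsProbabilityMeasure P] (hA : ∀ k, Measurable (A k))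
    (hL : ∀ k, Measurable (L k)) (hA3 : A3ok P A L) (m : ℕ) (a : Bool) :
    ∫ ω in Etr A m a, Wsw P A L ω ∂P = P.real (Etr A m a) := by
  have h := setIntegral_preimage_Wsw_mul hA hL hA3 (Z := fun _ _ => (1 : ℝ))
    (fun _ => integrable_const 1) (fun b => seqMeanExchangeable_const 1 b) (tails K m a)
  simp only [mul_one, integral_const, probReal_univ, smul_eq_mul] at h
  rw [Etr_eq_preimage_tails, h, measureReal_def, measureReal_def, Measure.restrict_apply_univ]

theorem setIntegral_Etr_Wrsw [IsProbabilityMeasure P] (hA : ∀ k, Measurable (A k))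
    (hL : ∀ k, Measurable (L k)) (hA3 : A3ok P A L) (m : ℕ) (a : Bool) :
    ∫ ω in Etr A m a, Wrsw P A L m ω ∂P = P.real (Etr A m a) := by
  have h := setIntegral_Etr_Wrsw_mul hA hL hA3 (Z := fun _ _ => (1 : ℝ))
    (fun _ => integrable_const 1) (fun b => seqMeanExchangeable_const 1 b) m a
  simpa using h

theorem setIntegral_Wsw_mul_div [IsProbabilityMeasure P] (hA : ∀ k, Measurable (A k))
    (hL : ∀ k, Measurable (L k)) (hYpi : ∀ a, Integrable (Ypot a) P) (hA1 : A1ok A Y Ypot)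
    (hA2 : A2ok P A L Ypot) (hA3 : A3ok P A L) {ψ0 : ℝ} {ψ : Fin K → ℝ}
    (hMSM : MSMeq P Ypot ψ0 ψ) {m : ℕ} {a : Bool} (hpos : 0 < P (Etr A m a)) :
    (∫ ω in Etr A m a, Wsw P A L ω * Y ω ∂P) / ∫ ω in Etr A m a, Wsw P A L ω ∂P =
      ψ0 + ∑ j, ψ j * cP P {ω | A (rev j) ω = true} (Etr A m a) := by
  have hnum : ∫ ω in Etr A m a, Wsw P A L ω * Y ω ∂P =
      ∫ ω in Etr A m a, msmMean ψ0 ψ (Function.swap A ω) ∂P := by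
    have hY : ∀ ω, Y ω = Ypot (Function.swap A ω) ω := fun ω => hA1 _ ω fun _ => rfl
    simp only [hY, Etr_eq_preimage_tails]
    rw [setIntegral_preimage_Wsw_mul hA hL hA3 hYpi
      (fun b => hA2.seqMeanExchangeable hA hL (fun a => (hYpi a).aemeasurable) b b)]
    exact setIntegral_congr_fun (measurable_pi_lambda _ hA (Finset.measurableSet _))
      fun ω _ => hMSM _
  have hE : P.real (Etr A m a) ≠ 0 := (ENNReal.toReal_pos hpos.ne' (measure_ne_top _ _)).ne'
  rw [hnum, setIntegral_Etr_Wsw hA hL hA3, setIntegral_msmMean hA, add_div,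
    mul_div_cancel_right₀ _ hE, Finset.sum_div]
  simp only [mul_div_assoc, cP, measureReal_def]

theorem qcoef_of_lt [IsFiniteMeasure P] {m : ℕ} (hpos1 : 0 < P (Etr A m true)) {j : Fin K}
    (hj : (j : ℕ) < m) : qcoef P A m j = 1 := by
  have hrev : K - m ≤ (rev j : ℕ) := by
    simp only [rev]
    omega
  have hsub : Etr A m true ⊆ {ω | A (rev j) ω = true} := fun ω hω => hω _ hrev
  have hdisj : Disjoint {ω | A (rev j) ω = true} (Etr A m false) :=
    Set.disjoint_left.2 fun ω hω hω' => by simp_all [Etr, EtrV]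
  rw [qcoef, cP_eq_one_of_subset hsub hpos1.ne', cP_eq_zero_of_disjoint hdisj, sub_zero]

theorem θW_Wsw [IsProbabilityMeasure P] (hA : ∀ k, Measurable (A k))
    (hL : ∀ k, Measurable (L k)) (hYpi : ∀ a, Integrable (Ypot a) P) (hA1 : A1ok A Y Ypot)
    (hA2 : A2ok P A L Ypot) (hA3 : A3ok P A L) {ψ0 : ℝ} {ψ : Fin K → ℝ}
    (hMSM : MSMeq P Ypot ψ0 ψ) {m : ℕ} (hpos1 : 0 < P (Etr A m true))
    (hpos0 : 0 < P (Etr A m false)) :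
    θW P A m (Wsw P A L) Y = (∑ j ∈ univ.filter (fun j : Fin K => (j : ℕ) < m), ψ j) +
      ∑ j ∈ univ.filter (fun j : Fin K => m ≤ (j : ℕ)), ψ j * qcoef P A m j := by
  have hall : θW P A m (Wsw P A L) Y = ∑ j, ψ j * qcoef P A m j := by
    rw [θW, setIntegral_Wsw_mul_div hA hL hYpi hA1 hA2 hA3 hMSM hpos1,
      setIntegral_Wsw_mul_div hA hL hYpi hA1 hA2 hA3 hMSM hpos0,
      add_sub_add_left_eq_sub, ← Finset.sum_sub_distrib]
    simp only [qcoef, mul_sub]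
  rw [hall, ← Finset.sum_filter_add_sum_filter_not _ fun j : Fin K => (j : ℕ) < m]
  congr 1
  · exact Finset.sum_congr rfl fun j hj => by
      rw [qcoef_of_lt hpos1 (Finset.mem_filter.1 hj).2, mul_one]
  · simp only [not_lt]

-- `Ypot (withTail m a (Function.swap A ω)) ω` is the paper's `Y^{a_m}(ω)`.
theorem θW_Wrsw [IsProbabilityMeasure P] (hA : ∀ k, Measurable (A k))
    (hL : ∀ k, Measurable (L k)) (hYpi : ∀ a, Integrable (Ypot a) P) (hA1 : A1ok A Y Ypot)
    (hA2 : A2ok P A L Ypot) (hA3 : A3ok P A L) {m : ℕ} (hpos1 : 0 < P (Etr A m true))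
    (hpos0 : 0 < P (Etr A m false)) :
    θW P A m (Wrsw P A L m) Y =
      (∫ ω, Ypot (withTail m true (Function.swap A ω)) ω ∂P) -
        ∫ ω, Ypot (withTail m false (Function.swap A ω)) ω ∂P := by
  have hY : ∀ ω, Y ω = Ypot (Function.swap A ω) ω := fun ω => hA1 _ ω fun _ => rfl
  have hratio : ∀ a : Bool, 0 < P (Etr A m a) →
      (∫ ω in Etr A m a, Wrsw P A L m ω * Y ω ∂P) / ∫ ω in Etr A m a, Wrsw P A L m ω ∂P =
        ∫ ω, Ypot (withTail m a (Function.swap A ω)) ω ∂P := fun a hpos => by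
    simp only [hY]
    have hE : P.real (Etr A m a) ≠ 0 := (ENNReal.toReal_pos hpos.ne' (measure_ne_top _ _)).ne'
    rw [setIntegral_Etr_Wrsw_mul hA hL hA3 hYpi
        (fun b => hA2.seqMeanExchangeable hA hL (fun a => (hYpi a).aemeasurable) b b),
      setIntegral_Etr_Wrsw hA hL hA3, mul_div_cancel_left₀ _ hE]
  rw [θW, hratio true hpos1, hratio false hpos0]

theorem A5ok.exists_setIntegral_eq [IsFiniteMeasure P] {m : ℕ} (hA5 : A5ok P A Ypot m) :
    ∃ (φ0 : (Fin K → Bool) → ℝ) (φ : (Fin K → Bool) → Fin K → ℝ), ∀ b a,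
      ∫ ω in Apast A (K - m) b, Ypot a ω ∂P =
        P.real (Apast A (K - m) b) * msmMean (φ0 b) (φ b) a := by
  choose! φ0 φ hφ using hA5
  refine ⟨φ0, φ, fun b a => ?_⟩
  rcases eq_zero_or_pos (P (Apast A (K - m) b)) with h0 | hpos
  · rw [setIntegral_measure_zero _ h0, measureReal_def, h0, ENNReal.toReal_zero, zero_mul]
  · rw [msmMean, ← hφ b hpos a, measureReal_def,
      mul_div_cancel₀ _ (ENNReal.toReal_pos hpos.ne' (measure_ne_top _ _)).ne']

theorem integral_withTail_true_sub_false [IsFiniteMeasure P] (hA : ∀ k, Measurable (A k))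
    (hYpi : ∀ a, Integrable (Ypot a) P) {ψ0 : ℝ} {ψ : Fin K → ℝ} (hMSM : MSMeq P Ypot ψ0 ψ)
    {m : ℕ} (hA5 : A5ok P A Ypot m) :
    (∫ ω, Ypot (withTail m true (Function.swap A ω)) ω ∂P) -
        ∫ ω, Ypot (withTail m false (Function.swap A ω)) ω ∂P =
      ∑ j ∈ univ.filter (fun j : Fin K => (j : ℕ) < m), ψ j := by
  obtain ⟨φ0, φ, hφ⟩ := hA5.exists_setIntegral_eq
  set p : (Fin K → Bool) → ℝ := fun b => P.real (Apast A (K - m) b)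
  -- the marginal model is the `p`-mixture of the conditional ones
  have hψ : ψ = fun j => ∑ b ∈ tails K m false, p b * φ b j := by
    refine msmMean_coeff_unique (c0 := ψ0) (d0 := ∑ b ∈ tails K m false, p b * φ0 b) fun a => ?_
    rw [← sum_mul_msmMean, ← hMSM.integral_eq a]
    simp only [p, ← hφ]
    exact integral_withTail_eq_sum hA (fun _ => hYpi a) m false
  have hsplit : ∀ a : Bool, ∫ ω, Ypot (withTail m a (Function.swap A ω)) ω ∂P =
      ∑ b ∈ tails K m false, p b * msmMean (φ0 b) (φ b) (withTail m a b) := fun a => by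
    have h := integral_withTail_eq_sum hA (Z := fun b => Ypot (withTail m a b))
      (fun _ => hYpi _) m false
    simp only [withTail_withTail] at h
    simp only [h, hφ, p]
  rw [hsplit, hsplit, ← Finset.sum_sub_distrib]
  simp only [← mul_sub, msmMean_withTail_true_sub_false, Finset.mul_sum]
  rw [Finset.sum_comm, hψ]

theorem θKfull_eq (hMSM : MSMeq P Ypot ψ0 ψ) : θKfull P Ypot = ∑ j, ψ j := by
  rw [θKfull, hMSM.integral_eq, hMSM.integral_eq, msmMean_const_true_sub_const_false]

end Estimands

theorem ordering_nonneg_general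
    {Ω : Type*} [MeasurableSpace Ω] {𝓛 : Type*} [MeasurableSpace 𝓛]
    [Fintype 𝓛] [MeasurableSingletonClass 𝓛]
    (P : Measure Ω) [IsProbabilityMeasure P]
    {K m : ℕ}
    (A : Fin K → Ω → Bool) (L : Fin K → Ω → 𝓛)
    (hA : ∀ k, Measurable (A k)) (hL : ∀ k, Measurable (L k))
    (Y : Ω → ℝ)
    (Ypot : (Fin K → Bool) → Ω → ℝ)
    (hYpi : ∀ a, Integrable (Ypot a) P)
    (hpos1 : 0 < P (Etr A m true)) (hpos0 : 0 < P (Etr A m false))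
    (hA1 : A1ok A Y Ypot) (hA2 : A2ok P A L Ypot) (hA3 : A3ok P A L)
    (ψ0 : ℝ) (ψ : Fin K → ℝ) (hMSM : MSMeq P Ypot ψ0 ψ)
    (hA41 : ∀ j, 0 ≤ ψ j)
    (hA5 : A5ok P A Ypot m)
    (hA6 : ∀ j : Fin K, m ≤ (j : ℕ) → 0 < qcoef P A m j ∧ qcoef P A m j < 1) :
    θW P A m (Wrsw P A L m) Y = (∑ j ∈ Finset.univ.filter (fun j : Fin K => (j : ℕ) < m), ψ j) ∧
    θW P A m (Wsw P A L) Y = (∑ j ∈ Finset.univ.filter (fun j : Fin K => (j : ℕ) < m), ψ j) +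
      (∑ j ∈ Finset.univ.filter (fun j : Fin K => m ≤ (j : ℕ)), ψ j * qcoef P A m j) ∧
    θKfull P Ypot = (∑ j : Fin K, ψ j) ∧
    θW P A m (Wrsw P A L m) Y ≤ θW P A m (Wsw P A L) Y ∧
    θW P A m (Wsw P A L) Y ≤ θKfull P Ypot := by
  have hrsw : θW P A m (Wrsw P A L m) Y = ∑ j ∈ univ.filter (fun j : Fin K => (j : ℕ) < m), ψ j :=
    (θW_Wrsw hA hL hYpi hA1 hA2 hA3 hpos1 hpos0).trans
      (integral_withTail_true_sub_false hA hYpi hMSM hA5)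
  have hsw := θW_Wsw hA hL hYpi hA1 hA2 hA3 hMSM hpos1 hpos0
  have hfull := θKfull_eq hMSM
  have hsplit : ∑ j, ψ j = (∑ j ∈ univ.filter (fun j : Fin K => (j : ℕ) < m), ψ j) +
      ∑ j ∈ univ.filter (fun j : Fin K => m ≤ (j : ℕ)), ψ j := by
    simp only [← not_lt, Finset.sum_filter_add_sum_filter_not]
  have hq0 : 0 ≤ ∑ j ∈ univ.filter (fun j : Fin K => m ≤ (j : ℕ)), ψ j * qcoef P A m j :=
    Finset.sum_nonneg fun j hj => mul_nonneg (hA41 j) (hA6 j (Finset.mem_filter.1 hj).2).1.le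
  have hq1 : ∑ j ∈ univ.filter (fun j : Fin K => m ≤ (j : ℕ)), ψ j * qcoef P A m j ≤
      ∑ j ∈ univ.filter (fun j : Fin K => m ≤ (j : ℕ)), ψ j :=
    Finset.sum_le_sum fun j hj =>
      mul_le_of_le_one_right (hA41 j) (hA6 j (Finset.mem_filter.1 hj).2).2.le
  exact ⟨hrsw, hsw, hfull, by linarith, by linarith⟩

/-- Ordering of estimands under nonnegative effects (equation (C.3.4)). -/
theorem ordering_nonneg
    {Ω : Type*} [MeasurableSpace Ω] {𝓛 : Type*} [MeasurableSpace 𝓛]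
    [Fintype 𝓛] [Nonempty 𝓛] [MeasurableSingletonClass 𝓛]
    (P : Measure Ω) [IsProbabilityMeasure P]
    {K m : ℕ} (hK : 1 ≤ K) (hm1 : 1 ≤ m) (hmK : m ≤ K)
    (A : Fin K → Ω → Bool) (L : Fin K → Ω → 𝓛)
    (hA : ∀ k, Measurable (A k)) (hL : ∀ k, Measurable (L k))
    (Y : Ω → ℝ) (hY : Measurable Y)
    (Ypot : (Fin K → Bool) → Ω → ℝ)
    (hYpm : ∀ a, Measurable (Ypot a)) (hYpi : ∀ a, Integrable (Ypot a) P)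
    (hpos1 : 0 < P (Etr A m true)) (hpos0 : 0 < P (Etr A m false))
    (hA1 : A1ok A Y Ypot) (hA2 : A2ok P A L Ypot) (hA3 : A3ok P A L)
    (ψ0 : ℝ) (ψ : Fin K → ℝ) (hMSM : MSMeq P Ypot ψ0 ψ)
    (hA41 : ∀ j, 0 ≤ ψ j)
    (hA5 : A5ok P A Ypot m)
    (hA6 : ∀ j : Fin K, m ≤ (j : ℕ) → 0 < qcoef P A m j ∧ qcoef P A m j < 1) :
    θW P A m (Wrsw P A L m) Y = (∑ j ∈ Finset.univ.filter (fun j : Fin K => (j : ℕ) < m), ψ j) ∧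
    θW P A m (Wsw P A L) Y = (∑ j ∈ Finset.univ.filter (fun j : Fin K => (j : ℕ) < m), ψ j) +
      (∑ j ∈ Finset.univ.filter (fun j : Fin K => m ≤ (j : ℕ)), ψ j * qcoef P A m j) ∧
    θKfull P Ypot = (∑ j : Fin K, ψ j) ∧
    θW P A m (Wrsw P A L m) Y ≤ θW P A m (Wsw P A L) Y ∧
    θW P A m (Wsw P A L) Y ≤ θKfull P Ypot :=
  ordering_nonneg_general P A L hA hL Y Ypot hYpi hpos1 hpos0 hA1 hA2 hA3 ψ0 ψ hMSM hA41 hA5 hA6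

end MSMPaper
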